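/- arXiv:2211.01090 — 2 statements merged into one kernel-verified Lean document; each statement's English description precedes it below -/
import Mathlib

section
/- For the balanced Rudin–Shapiro sequence and all m ∈ ℤ with M := m_1+m_2+m_3, the renormalisation identity η^{(4)}(4m_1, 4m_2, 4m_3) = (1/2)(1 + (−1)^M) η^{(4)}(m_1, m_2, m_3) holds for all (m_1,m_2,m_3) ∈ ℤ³. -/
open Filter Finset

lemma my_sum_Ioc_split (g : ℤ → ℝ) {s t u : ℤ} (h₁ : s ≤ t) (h₂ : t ≤ u) :
    ∑ i ∈ Finset.Ioc s u, g i = ∑ i ∈ Finset.Ioc s t, g i + ∑ i ∈ Finset.Ioc t u, g i := by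
  rw [← Finset.Ioc_union_Ioc_eq_Ioc h₁ h₂, Finset.sum_union]
  rw [Finset.disjoint_left]
  intro x hx hx'
  simp only [Finset.mem_Ioc] at hx hx'
  omega

lemma sum_Ioc_four (g : ℤ → ℝ) (t : ℤ) :
    ∑ i ∈ Finset.Ioc t (t+4), g i = g (t+1) + g (t+2) + g (t+3) + g (t+4) := by
  have h : Finset.Ioc t (t+4) = {t+1, t+2, t+3, t+4} := by
    ext x; simp only [Finset.mem_Ioc, Finset.mem_insert, Finset.mem_singleton]; omega
  rw [h, Finset.sum_insert (by simp only [Finset.mem_insert, Finset.mem_singleton]; omega),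
    Finset.sum_insert (by simp only [Finset.mem_insert, Finset.mem_singleton]; omega),
    Finset.sum_insert (by simp only [Finset.mem_singleton]; omega), Finset.sum_singleton]
  ring

lemma sum_Ioc_one (g : ℤ → ℝ) (t : ℤ) :
    ∑ i ∈ Finset.Ioc t (t+1), g i = g (t+1) := by
  have h : Finset.Ioc t (t+1) = {t+1} := by
    ext x; simp only [Finset.mem_Ioc, Finset.mem_singleton]; omega
  rw [h, Finset.sum_singleton]

lemma sum_blocks (b : ℤ → ℝ) : ∀ (n : ℕ) (t : ℤ),
    ∑ i ∈ Finset.Ioc (4*t-1) (4*t-1+4*(n:ℤ)), b i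
      = ∑ j ∈ Finset.Ioc (t-1) (t-1+(n:ℤ)), (b (4*j) + b (4*j+1) + b (4*j+2) + b (4*j+3)) := by
  intro n
  induction n with
  | zero => intro t; simp
  | succ n ih =>
    intro t
    have hn : (0:ℤ) ≤ (n:ℤ) := Int.natCast_nonneg n
    push_cast
    rw [my_sum_Ioc_split b (show (4*t-1 : ℤ) ≤ 4*t-1+4*(n:ℤ) by omega)
        (show (4*t-1+4*(n:ℤ) : ℤ) ≤ 4*t-1+4*((n:ℤ)+1) by omega),
      my_sum_Ioc_split _ (show (t-1 : ℤ) ≤ t-1+(n:ℤ) by omega)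
        (show (t-1+(n:ℤ) : ℤ) ≤ t-1+((n:ℤ)+1) by omega)]
    have h4 := sum_Ioc_four b (4*t-1+4*(n:ℤ))
    have h1 := sum_Ioc_one (fun j => b (4*j) + b (4*j+1) + b (4*j+2) + b (4*j+3)) (t-1+(n:ℤ))
    have e1 : (4*t-1+4*(n:ℤ)) + 4 = 4*t-1+4*((n:ℤ)+1) := by ring
    have e2 : (t-1+(n:ℤ)) + 1 = t-1+((n:ℤ)+1) := by ring
    rw [e1] at h4
    rw [e2] at h1
    rw [h4, h1, ih t]
    ring_nf

lemma renorm_aux (b c : ℤ → ℝ) (σ L4 L : ℝ)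
    (hbb : ∀ i, |b i| ≤ 1) (hcb : ∀ i, |c i| ≤ 1) (hσ : |σ| ≤ 1)
    (hblk : ∀ j : ℤ, b (4*j) + b (4*j+1) + b (4*j+2) + b (4*j+3) = (2+2*σ) * c j)
    (hf : Tendsto (fun N : ℕ => (1 / (2 * (N : ℝ) + 1)) * ∑ i ∈ Finset.Icc (-(N:ℤ)) (N:ℤ), b i)
      atTop (nhds L4))
    (hg : Tendsto (fun N : ℕ => (1 / (2 * (N : ℝ) + 1)) * ∑ i ∈ Finset.Icc (-(N:ℤ)) (N:ℤ), c i)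
      atTop (nhds L)) :
    L4 = (1/2) * (1+σ) * L := by
  -- the subsequence N = 4K+3
  have hsub : Tendsto (fun K : ℕ => 4*K+3) atTop atTop :=
    tendsto_atTop_atTop.mpr fun n => ⟨n, fun a ha => by omega⟩
  have hf' := hf.comp hsub
  have hg' := hg.comp (tendsto_add_atTop_nat 1)
  -- the inverse factor
  have hq : Tendsto (fun K : ℕ => (8*(K:ℝ)+7)⁻¹) atTop (nhds 0) := by
    apply Filter.Tendsto.inv_tendsto_atTop
    apply tendsto_atTop_add_const_right
    exact tendsto_natCast_atTop_atTop.const_mul_atTop (by norm_num)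
  -- ratio tends to 1/4
  have t1 : Tendsto (fun K : ℕ => (2*(K:ℝ)+3) * (8*(K:ℝ)+7)⁻¹) atTop (nhds (1/4)) := by
    have heq : ∀ K : ℕ, (1:ℝ)/4 + (5/4) * (8*(K:ℝ)+7)⁻¹ = (2*(K:ℝ)+3) * (8*(K:ℝ)+7)⁻¹ := by
      intro K
      have h7 : (8*(K:ℝ)+7) ≠ 0 := by positivity
      field_simp
      ring
    have := ((hq.const_mul (5/4)).const_add (1/4)).congr heq
    simpa using this
  -- error term tends to 0
  have t3 : Tendsto (fun K : ℕ => (8*(K:ℝ)+7)⁻¹ * ((2+2*σ) * c ((K:ℤ)+1) + b (-4*(K:ℤ)-4)))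
      atTop (nhds 0) := by
    apply squeeze_zero_norm (a := fun K : ℕ => 5 * (8*(K:ℝ)+7)⁻¹)
    · intro K
      have h7 : (0:ℝ) < 8*(K:ℝ)+7 := by positivity
      have h1 : |c ((K:ℤ)+1)| ≤ 1 := hcb _
      have h2 : |b (-4*(K:ℤ)-4)| ≤ 1 := hbb _
      have h3 : |(2+2*σ) * c ((K:ℤ)+1) + b (-4*(K:ℤ)-4)| ≤ 5 := by
        have ha1 := abs_add_le ((2+2*σ) * c ((K:ℤ)+1)) (b (-4*(K:ℤ)-4))
        have ha2 := abs_mul (2+2*σ) (c ((K:ℤ)+1))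
        have ha3 : |2+2*σ| ≤ 4 := by
          have := abs_add_le (2:ℝ) (2*σ)
          have h2σ : |2*σ| ≤ 2 := by rw [abs_mul]; norm_num; linarith [hσ]
          simp only [abs_two] at this
          linarith
        nlinarith [abs_nonneg ((2+2*σ) * c ((K:ℤ)+1)), abs_nonneg (c ((K:ℤ)+1)),
          abs_nonneg (2+2*σ)]
      rw [Real.norm_eq_abs, abs_mul, abs_inv, abs_of_pos h7]
      have : (8*(K:ℝ)+7)⁻¹ ≥ 0 := by positivity
      calc (8*(K:ℝ)+7)⁻¹ * |(2+2*σ) * c ((K:ℤ)+1) + b (-4*(K:ℤ)-4)|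
          ≤ (8*(K:ℝ)+7)⁻¹ * 5 := by
            exact mul_le_mul_of_nonneg_left h3 this
        _ = 5 * (8*(K:ℝ)+7)⁻¹ := by ring
    · simpa using hq.const_mul (5:ℝ)
  -- combine limits
  have w : Tendsto (fun K : ℕ =>
      (2+2*σ) * ((2*(K:ℝ)+3) * (8*(K:ℝ)+7)⁻¹) *
        ((1 / (2 * ((K+1 : ℕ) : ℝ) + 1)) * ∑ i ∈ Finset.Icc (-((K+1:ℕ):ℤ)) ((K+1:ℕ):ℤ), c i)
      - (8*(K:ℝ)+7)⁻¹ * ((2+2*σ) * c ((K:ℤ)+1) + b (-4*(K:ℤ)-4)))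
      atTop (nhds ((2+2*σ) * (1/4) * L - 0)) :=
    (((t1.const_mul (2+2*σ)).mul hg').sub t3)
  -- pointwise identity
  have hEq : ∀ K : ℕ,
      (2+2*σ) * ((2*(K:ℝ)+3) * (8*(K:ℝ)+7)⁻¹) *
        ((1 / (2 * ((K+1 : ℕ) : ℝ) + 1)) * ∑ i ∈ Finset.Icc (-((K+1:ℕ):ℤ)) ((K+1:ℕ):ℤ), c i)
      - (8*(K:ℝ)+7)⁻¹ * ((2+2*σ) * c ((K:ℤ)+1) + b (-4*(K:ℤ)-4))
      = ((fun N : ℕ => (1 / (2 * (N : ℝ) + 1)) * ∑ i ∈ Finset.Icc (-(N:ℤ)) (N:ℤ), b i) ∘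
          (fun K : ℕ => 4*K+3)) K := by
    intro K
    simp only [Function.comp]
    -- rewrite the b-sum
    have hS1 : (Finset.Icc (-((4*K+3:ℕ):ℤ)) ((4*K+3:ℕ):ℤ)) = Finset.Ioc (-4*(K:ℤ)-4) (4*(K:ℤ)+3) := by
      ext x; simp only [Finset.mem_Icc, Finset.mem_Ioc]; push_cast; omega
    have hS2 : ∑ i ∈ Finset.Ioc (-4*(K:ℤ)-5) (4*(K:ℤ)+3), b i
        = b (-4*(K:ℤ)-4) + ∑ i ∈ Finset.Ioc (-4*(K:ℤ)-4) (4*(K:ℤ)+3), b i := by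
      rw [my_sum_Ioc_split b (show (-4*(K:ℤ)-5) ≤ -4*(K:ℤ)-4 by omega)
        (show (-4*(K:ℤ)-4 : ℤ) ≤ 4*(K:ℤ)+3 by omega)]
      have := sum_Ioc_one b (-4*(K:ℤ)-5)
      rw [show (-4*(K:ℤ)-5)+1 = -4*(K:ℤ)-4 by ring] at this
      rw [this]
    have hS3 : ∑ i ∈ Finset.Ioc (-4*(K:ℤ)-5) (4*(K:ℤ)+3), b i
        = ∑ j ∈ Finset.Ioc (-(K:ℤ)-2) (K:ℤ), (b (4*j) + b (4*j+1) + b (4*j+2) + b (4*j+3)) := by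
      have := sum_blocks b (2*K+2) (-(K:ℤ)-1)
      push_cast at this
      rw [show (-4*(K:ℤ)-5) = 4*(-(K:ℤ)-1)-1 by ring,
        show (4*(K:ℤ)+3) = 4*(-(K:ℤ)-1)-1+4*(2*(K:ℤ)+2) by ring,
        show (-(K:ℤ)-2) = (-(K:ℤ)-1)-1 by ring,
        show (K:ℤ) = (-(K:ℤ)-1)-1+(2*(K:ℤ)+2) by ring]
      convert this using 3 <;> ring
    have hS4 : ∑ j ∈ Finset.Ioc (-(K:ℤ)-2) (K:ℤ), (b (4*j) + b (4*j+1) + b (4*j+2) + b (4*j+3))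
        = (2+2*σ) * ∑ j ∈ Finset.Ioc (-(K:ℤ)-2) (K:ℤ), c j := by
      rw [Finset.mul_sum]
      exact Finset.sum_congr rfl fun j _ => hblk j
    have hS5 : ∑ i ∈ Finset.Icc (-((K+1:ℕ):ℤ)) ((K+1:ℕ):ℤ), c i
        = ∑ j ∈ Finset.Ioc (-(K:ℤ)-2) (K:ℤ), c j + c ((K:ℤ)+1) := by
      have hcc : (Finset.Icc (-((K+1:ℕ):ℤ)) ((K+1:ℕ):ℤ)) = Finset.Ioc (-(K:ℤ)-2) ((K:ℤ)+1) := by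
        ext x; simp only [Finset.mem_Icc, Finset.mem_Ioc]; push_cast; omega
      rw [hcc, my_sum_Ioc_split c (show (-(K:ℤ)-2) ≤ (K:ℤ) by omega)
        (show (K:ℤ) ≤ (K:ℤ)+1 by omega)]
      have := sum_Ioc_one c (K:ℤ)
      rw [this]
    rw [hS1]
    have hB : ∑ i ∈ Finset.Ioc (-4*(K:ℤ)-4) (4*(K:ℤ)+3), b i
        = (2+2*σ) * (∑ i ∈ Finset.Icc (-((K+1:ℕ):ℤ)) ((K+1:ℕ):ℤ), c i - c ((K:ℤ)+1))
          - b (-4*(K:ℤ)-4) := by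
      have := hS2
      rw [hS3, hS4] at this
      rw [hS5]
      linarith [this]
    rw [hB]
    have h7 : ((2:ℝ) * ((4*K+3:ℕ):ℝ) + 1) ≠ 0 := by positivity
    have h7' : (8*(K:ℝ)+7) ≠ 0 := by positivity
    have h3' : ((2:ℝ) * ((K+1:ℕ):ℝ) + 1) ≠ 0 := by positivity
    have hc1 : ((4*K+3:ℕ):ℝ) = 4*(K:ℝ)+3 := by push_cast; ring
    have hc2 : ((K+1:ℕ):ℝ) = (K:ℝ)+1 := by push_cast; ring
    rw [hc1, hc2] at *
    field_simp
    ring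
  have hfin := tendsto_nhds_unique hf' ((w.congr hEq))
  rw [hfin]
  ring

theorem rudin_shapiro_four_point_renormalisation (a : ℤ → ℝ)
    (ha : ∀ i, a i = 1 ∨ a i = -1)
    (hrec : ∀ m : ℤ, a (4 * m) = a m ∧ a (4 * m + 1) = a m ∧
      a (4 * m + 2) = (-1 : ℝ) ^ m * a m ∧ a (4 * m + 3) = -((-1 : ℝ) ^ m) * a m)
    (η θ : ℤ → ℤ → ℤ → ℝ)
    (hη : ∀ m₁ m₂ m₃ : ℤ, Tendsto (fun N : ℕ =>
        (1 / (2 * (N : ℝ) + 1)) *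
          ∑ i ∈ Finset.Icc (-(N : ℤ)) (N : ℤ),
            a i * a (i + m₁) * a (i + m₂) * a (i + m₃))
      atTop (nhds (η m₁ m₂ m₃)))
    (hθ : ∀ m₁ m₂ m₃ : ℤ, Tendsto (fun N : ℕ =>
        (1 / (2 * (N : ℝ) + 1)) *
          ∑ i ∈ Finset.Icc (-(N : ℤ)) (N : ℤ),
            (-1 : ℝ) ^ i * a i * a (i + m₁) * a (i + m₂) * a (i + m₃))
      atTop (nhds (θ m₁ m₂ m₃)))
    (m₁ m₂ m₃ : ℤ) :
    η (4 * m₁) (4 * m₂) (4 * m₃) =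
      (1 / 2) * (1 + (-1 : ℝ) ^ (m₁ + m₂ + m₃)) * η m₁ m₂ m₃ := by
  have habs : ∀ i, |a i| = 1 := fun i => by rcases ha i with h|h <;> simp [h]
  have hne : (-1:ℝ) ≠ 0 := by norm_num
  apply renorm_aux (fun i => a i * a (i + 4*m₁) * a (i + 4*m₂) * a (i + 4*m₃))
    (fun i => a i * a (i + m₁) * a (i + m₂) * a (i + m₃)) ((-1:ℝ)^(m₁+m₂+m₃))
  · intro i
    simp only [abs_mul, habs]
    norm_num
  · intro i
    simp only [abs_mul, habs]
    norm_num
  · rcases Int.even_or_odd (m₁+m₂+m₃) with h | h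
    · rw [h.neg_one_zpow]; norm_num
    · rw [h.neg_one_zpow]; norm_num
  · intro j
    beta_reduce
    have key : ∀ k : ℤ, 4*j + 4*k = 4*(j+k) ∧ (4*j+1) + 4*k = 4*(j+k)+1 ∧
        (4*j+2) + 4*k = 4*(j+k)+2 ∧ (4*j+3) + 4*k = 4*(j+k)+3 := by intro k; omega
    rw [(key m₁).1, (key m₂).1, (key m₃).1, (key m₁).2.1, (key m₂).2.1, (key m₃).2.1,
      (key m₁).2.2.1, (key m₂).2.2.1, (key m₃).2.2.1,
      (key m₁).2.2.2, (key m₂).2.2.2, (key m₃).2.2.2]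
    rw [(hrec j).1, (hrec (j+m₁)).1, (hrec (j+m₂)).1, (hrec (j+m₃)).1,
      (hrec j).2.1, (hrec (j+m₁)).2.1, (hrec (j+m₂)).2.1, (hrec (j+m₃)).2.1,
      (hrec j).2.2.1, (hrec (j+m₁)).2.2.1, (hrec (j+m₂)).2.2.1, (hrec (j+m₃)).2.2.1,
      (hrec j).2.2.2, (hrec (j+m₁)).2.2.2, (hrec (j+m₂)).2.2.2, (hrec (j+m₃)).2.2.2]
    rw [zpow_add₀ hne j m₁, zpow_add₀ hne j m₂, zpow_add₀ hne j m₃,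
      zpow_add₀ hne (m₁+m₂) m₃, zpow_add₀ hne m₁ m₂]
    have hx : (-1:ℝ)^j * (-1:ℝ)^j = 1 := by
      rw [← zpow_add₀ hne]; exact Even.neg_one_zpow ⟨j, rfl⟩
    linear_combination (2 * (-1:ℝ)^m₁ * (-1:ℝ)^m₂ * (-1:ℝ)^m₃ *
      (a j * a (j+m₁) * a (j+m₂) * a (j+m₃)) * ((-1:ℝ)^j * (-1:ℝ)^j + 1)) * hx
  · exact hη (4*m₁) (4*m₂) (4*m₃)
  · exact hη m₁ m₂ m₃
end

section
/- For the balanced Rudin–Shapiro sequence, for every n ≥ 1 and every ℓ ∈ ℤ: η^{(4)}(1, 2^n(2ℓ+1), 2^n(2ℓ+1)+1) = 1 − 3/2^n, and η^{(4)}(1, 2ℓ+1, 2ℓ+2) = 0. -/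
open Filter Finset


lemma neg_one_zpow_two_mul (t : ℤ) : (-1:ℝ)^(2*t) = 1 := by
  rw [zpow_mul]; norm_num

lemma neg_one_zpow_sq (k : ℤ) : (-1:ℝ)^k * (-1:ℝ)^k = 1 := by
  rw [← zpow_add₀ (by norm_num : (-1:ℝ) ≠ 0), ← two_mul, neg_one_zpow_two_mul]

lemma neg_one_zpow_add (s t : ℤ) : (-1:ℝ)^(s+t) = (-1:ℝ)^s * (-1:ℝ)^t :=
  zpow_add₀ (by norm_num) s t

lemma neg_one_zpow_odd (t : ℤ) : (-1:ℝ)^(2*t+1) = -1 := by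
  rw [neg_one_zpow_add, neg_one_zpow_two_mul, zpow_one, one_mul]

lemma neg_one_zpow_pm (j : ℤ) : (-1:ℝ)^j = 1 ∨ (-1:ℝ)^j = -1 :=
  mul_self_eq_one_iff.mp (neg_one_zpow_sq j)

lemma tendsto_linear_atTop (c d : ℝ) (hc : 0 < c) :
    Tendsto (fun M : ℕ => c*(M:ℝ)+d) atTop atTop :=
  tendsto_atTop_add_const_right _ d (Tendsto.const_mul_atTop hc tendsto_natCast_atTop_atTop)

lemma tendsto_ratio (p q c d : ℝ) (hc : 0 < c) (hd : 0 < d) :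
    Tendsto (fun M : ℕ => (p*(M:ℝ)+q)/(c*(M:ℝ)+d)) atTop (nhds (p/c)) := by
  have h0 : ∀ M : ℕ, (p*(M:ℝ)+q)/(c*(M:ℝ)+d) = p/c + (q*c-p*d)/(c*(c*(M:ℝ)+d)) := by
    intro M
    have h1 : (0:ℝ) < c*(M:ℝ)+d := by positivity
    field_simp
    ring
  have h2 : Tendsto (fun M : ℕ => p/c + (q*c-p*d)/(c*(c*(M:ℝ)+d))) atTop (nhds (p/c + 0)) := by
    apply Tendsto.add tendsto_const_nhds
    apply Tendsto.div_atTop tendsto_const_nhds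
    exact (tendsto_linear_atTop c d hc).const_mul_atTop hc
  rw [add_zero] at h2
  exact h2.congr (fun M => (h0 M).symm)

lemma tendsto_bounded_div (C : ℝ) (u : ℕ → ℝ) (hu : ∀ M, |u M| ≤ C) (c d : ℝ)
    (hc : 0 < c) (hd : 0 < d) :
    Tendsto (fun M : ℕ => u M/(c*(M:ℝ)+d)) atTop (nhds 0) := by
  refine squeeze_zero_norm (fun M => ?_)
    (Tendsto.div_atTop (tendsto_const_nhds (x := C)) (tendsto_linear_atTop c d hc))
  have h1 : (0:ℝ) < c*(M:ℝ)+d := by positivity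
  rw [Real.norm_eq_abs, abs_div, abs_of_pos h1]
  exact div_le_div_of_nonneg_right (hu M) h1.le

lemma sum_abs_le_card (f : ℤ → ℝ) (h : ∀ i, |f i| ≤ 1) (s : Finset ℤ) :
    |∑ i ∈ s, f i| ≤ (s.card : ℝ) := by
  calc |∑ i ∈ s, f i| ≤ ∑ i ∈ s, |f i| := Finset.abs_sum_le_sum_abs _ _
  _ ≤ ∑ i ∈ s, 1 := Finset.sum_le_sum (fun i _ => h i)
  _ = (s.card : ℝ) := by simp
def RSf (a : ℤ → ℝ) (m i : ℤ) : ℝ := a i * a (i + 1) * a (i + m) * a (i + m + 1)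

section RS
variable (a : ℤ → ℝ) (ha : ∀ i, a i = 1 ∨ a i = -1)
  (hrec : ∀ m : ℤ, a (4 * m) = a m ∧ a (4 * m + 1) = a m ∧
      a (4 * m + 2) = (-1 : ℝ) ^ m * a m ∧ a (4 * m + 3) = -((-1 : ℝ) ^ m) * a m)

include ha in
lemma RSf_pm (m i : ℤ) : RSf a m i = 1 ∨ RSf a m i = -1 := by
  rcases ha i with h0|h0 <;> rcases ha (i+1) with h1|h1 <;> rcases ha (i+m) with h2|h2 <;>
    rcases ha (i+m+1) with h3|h3 <;> simp [RSf, h0, h1, h2, h3]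

include ha in
lemma RSf_abs (m i : ℤ) : |RSf a m i| ≤ 1 := by
  rcases RSf_pm a ha m i with h|h <;> rw [h] <;> norm_num

include ha in
lemma RSf_sq (m i : ℤ) : RSf a m i * RSf a m i = 1 := by
  rcases RSf_pm a ha m i with h|h <;> rw [h] <;> norm_num

include ha hrec in
lemma hP (j : ℤ) : a (2*j) * a (2*j+1) = (-1:ℝ)^j := by
  rcases Int.even_or_odd j with ⟨k, rfl⟩ | ⟨k, rfl⟩
  · rw [show 2*(k+k) = 4*k by ring, show 4*k+1 = 4*k+1 from rfl, (hrec k).1, (hrec k).2.1,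
      show k+k = 2*k by ring, neg_one_zpow_two_mul]
    rcases ha k with h|h <;> rw [h] <;> norm_num
  · rw [show 2*(2*k+1) = 4*k+2 by ring, show (4*k+2)+1 = 4*k+3 by ring,
      (hrec k).2.2.1, (hrec k).2.2.2, neg_one_zpow_odd]
    rcases ha k with h|h <;> rcases neg_one_zpow_pm k with h'|h' <;> rw [h, h'] <;> norm_num

include ha hrec in
lemma hPP (t j : ℤ) : a (2*j) * a (2*j+1) * (a (2*(j+t)) * a (2*(j+t)+1)) = (-1:ℝ)^t := by
  rw [hP a ha hrec j, hP a ha hrec (j+t), neg_one_zpow_add, ← mul_assoc, neg_one_zpow_sq, one_mul]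

include ha hrec in
lemma hQ1 (t k : ℤ) : a (4*k+1) * a (4*k+2) * (a (4*(k+t)+1) * a (4*(k+t)+2)) = (-1:ℝ)^t := by
  rw [(hrec k).2.1, (hrec k).2.2.1, (hrec (k+t)).2.1, (hrec (k+t)).2.2.1, neg_one_zpow_add]
  rcases ha k with h1|h1 <;> rcases ha (k+t) with h2|h2 <;> rcases neg_one_zpow_pm k with h3|h3 <;>
    rcases neg_one_zpow_pm t with h4|h4 <;> rw [h1, h2, h3, h4] <;> ring

include ha hrec in
lemma fact_r0 (m k : ℤ) : RSf a (4*m) (4*k) = 1 := by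
  simp only [RSf]
  rw [show 4*k+4*m = 4*(k+m) by ring, show 4*(k+m)+1 = 4*(k+m)+1 from rfl,
    (hrec k).1, (hrec k).2.1, (hrec (k+m)).1, (hrec (k+m)).2.1]
  rcases ha k with h1|h1 <;> rcases ha (k+m) with h2|h2 <;> rw [h1, h2] <;> norm_num

include ha hrec in
lemma fact_r1 (m k : ℤ) : RSf a (4*m) (4*k+1) = (-1:ℝ)^m := by
  simp only [RSf]
  rw [show 4*k+1+1 = 4*k+2 by ring, show 4*k+1+4*m = 4*(k+m)+1 by ring,
    show 4*(k+m)+1+1 = 4*(k+m)+2 by ring,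
    (hrec k).2.1, (hrec k).2.2.1, (hrec (k+m)).2.1, (hrec (k+m)).2.2.1, neg_one_zpow_add]
  rcases ha k with h1|h1 <;> rcases ha (k+m) with h2|h2 <;> rcases neg_one_zpow_pm k with h3|h3 <;>
    rcases neg_one_zpow_pm m with h4|h4 <;> rw [h1, h2, h3, h4] <;> ring

include ha hrec in
lemma fact_r2 (m k : ℤ) : RSf a (4*m) (4*k+2) = 1 := by
  simp only [RSf]
  rw [show 4*k+2+1 = 4*k+3 by ring, show 4*k+2+4*m = 4*(k+m)+2 by ring,
    show 4*(k+m)+2+1 = 4*(k+m)+3 by ring,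
    (hrec k).2.2.1, (hrec k).2.2.2, (hrec (k+m)).2.2.1, (hrec (k+m)).2.2.2]
  rcases ha k with h1|h1 <;> rcases ha (k+m) with h2|h2 <;> rcases neg_one_zpow_pm k with h3|h3 <;>
    rcases neg_one_zpow_pm (k+m) with h4|h4 <;> rw [h1, h2, h3, h4] <;> ring

include ha hrec in
lemma fact_r3 (m k : ℤ) : RSf a (4*m) (4*k+3) = (-1:ℝ)^m * RSf a m k := by
  simp only [RSf]
  rw [show 4*k+3+1 = 4*(k+1) by ring, show 4*k+3+4*m = 4*(k+m)+3 by ring,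
    show 4*(k+m)+3+1 = 4*((k+m)+1) by ring,
    (hrec k).2.2.2, (hrec (k+1)).1, (hrec (k+m)).2.2.2, (hrec ((k+m)+1)).1, neg_one_zpow_add]
  rcases neg_one_zpow_pm k with h3|h3 <;> rcases neg_one_zpow_pm m with h4|h4 <;>
    rw [h3, h4] <;> ring

include ha in
lemma fact_mul (m i : ℤ) :
    RSf a m i * RSf a m (i+m) = a i * a (i+1) * (a (i+2*m) * a (i+2*m+1)) := by
  simp only [RSf]
  rw [show i+m+m = i+2*m by ring]
  rcases ha (i+m) with h1|h1 <;> rcases ha (i+m+1) with h2|h2 <;> rw [h1, h2] <;> ring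

include ha hrec in
lemma fact_odd_pair (m : ℤ) (hm : m % 2 = 1) :
    ∀ i, i % 2 = 0 → RSf a m (i + m) = - RSf a m i := by
  intro i hi
  obtain ⟨j, rfl⟩ : ∃ j, i = 2*j := ⟨i/2, by omega⟩
  obtain ⟨t, rfl⟩ : ∃ t, m = 2*t+1 := ⟨m/2, by omega⟩
  have h1 : RSf a (2*t+1) (2*j) * RSf a (2*t+1) (2*j + (2*t+1)) = -1 := by
    rw [fact_mul a ha]
    rw [show 2*j+2*(2*t+1) = 2*(j+(2*t+1)) by ring]
    rw [hPP a ha hrec (2*t+1) j]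
    exact neg_one_zpow_odd t
  have h2 := RSf_sq a ha (2*t+1) (2*j)
  linear_combination (RSf a (2*t+1) (2*j)) * h1 - (RSf a (2*t+1) (2*j + (2*t+1))) * h2

include ha hrec in
lemma fact_two_even (t i : ℤ) (hi : i % 2 = 0) : RSf a (2*t) i = (-1:ℝ)^t := by
  obtain ⟨j, rfl⟩ : ∃ j, i = 2*j := ⟨i/2, by omega⟩
  simp only [RSf]
  rw [show 2*j+2*t = 2*(j+t) by ring]
  linear_combination hPP a ha hrec t j

include ha hrec in
lemma fact_two_pair (t : ℤ) (ht : t % 2 = 1) :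
    ∀ i, i % 4 = 1 → RSf a (2*t) (i + 2*t) = - RSf a (2*t) i := by
  intro i hi
  obtain ⟨k, rfl⟩ : ∃ k, i = 4*k+1 := ⟨i/4, by omega⟩
  obtain ⟨s, rfl⟩ : ∃ s, t = 2*s+1 := ⟨t/2, by omega⟩
  have h1 : RSf a (2*(2*s+1)) (4*k+1) * RSf a (2*(2*s+1)) ((4*k+1) + 2*(2*s+1)) = -1 := by
    rw [fact_mul a ha]
    rw [show 4*k+1+1 = 4*k+2 by ring, show 4*k+1+2*(2*(2*s+1)) = 4*(k+(2*s+1))+1 by ring,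
      show 4*(k+(2*s+1))+1+1 = 4*(k+(2*s+1))+2 by ring]
    rw [hQ1 a ha hrec (2*s+1) k]
    exact neg_one_zpow_odd s
  have h2 := RSf_sq a ha (2*(2*s+1)) (4*k+1)
  linear_combination (RSf a (2*(2*s+1)) (4*k+1)) * h1 -
    (RSf a (2*(2*s+1)) ((4*k+1) + 2*(2*s+1))) * h2

end RS

lemma sum_abs_le_card' (f : ℤ → ℝ) (h : ∀ i, |f i| ≤ 1) (s : Finset ℤ) :
    |∑ i ∈ s, f i| ≤ (s.card : ℝ) := by
  calc |∑ i ∈ s, f i| ≤ ∑ i ∈ s, |f i| := Finset.abs_sum_le_sum_abs _ _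
  _ ≤ ∑ i ∈ s, 1 := Finset.sum_le_sum (fun i _ => h i)
  _ = (s.card : ℝ) := by simp

lemma cancel_bound (f : ℤ → ℝ) (hb : ∀ i, |f i| ≤ 1) (m : ℤ) (p : ℤ → Prop) [DecidablePred p]
    (hpair : ∀ i, p i → f (i + m) = - f i) (N : ℤ) :
    |(∑ i ∈ (Icc (-N) N).filter p, f i) +
      ∑ i ∈ (Icc (-N) N).filter (fun i => p (i - m)), f i| ≤ 2 * (m.natAbs : ℝ) := by
  have key : ((Icc (-N-m) (N-m)).filter p).map (addRightEmbedding m)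
      = (Icc (-N) N).filter (fun i => p (i - m)) := by
    ext i
    simp only [Finset.mem_map, Finset.mem_filter, Finset.mem_Icc, addRightEmbedding_apply]
    constructor
    · rintro ⟨j, ⟨⟨h1, h2⟩, h3⟩, rfl⟩
      exact ⟨⟨by omega, by omega⟩, by simpa using h3⟩
    · rintro ⟨⟨h1, h2⟩, h3⟩
      exact ⟨i - m, ⟨⟨by omega, by omega⟩, h3⟩, by ring⟩
  have h2 : ∑ i ∈ (Icc (-N) N).filter (fun i => p (i - m)), f i
      = - ∑ j ∈ (Icc (-N-m) (N-m)).filter p, f j := by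
    rw [← key, Finset.sum_map]
    simp only [addRightEmbedding_apply]
    rw [← Finset.sum_neg_distrib]
    exact Finset.sum_congr rfl fun j hj => hpair j (Finset.mem_filter.mp hj).2
  rw [h2, ← sub_eq_add_neg]
  set A := (Icc (-N) N).filter p with hA
  set B := (Icc (-N-m) (N-m)).filter p with hB
  have hsplit : ∑ i ∈ A, f i - ∑ i ∈ B, f i = ∑ i ∈ A \ B, f i - ∑ i ∈ B \ A, f i := by
    have e1 : ∑ i ∈ A \ (A ∩ B), f i + ∑ i ∈ A ∩ B, f i = ∑ i ∈ A, f i :=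
      Finset.sum_sdiff (Finset.inter_subset_left)
    have e2 : ∑ i ∈ B \ (B ∩ A), f i + ∑ i ∈ B ∩ A, f i = ∑ i ∈ B, f i :=
      Finset.sum_sdiff (Finset.inter_subset_left)
    rw [Finset.sdiff_inter_self_left] at e1 e2
    rw [← e1, ← e2, Finset.inter_comm B A]
    ring
  rw [hsplit]
  have hAB : (A \ B).card ≤ m.natAbs := by
    have hsub : A \ B ⊆ Icc (N-m+1) N ∪ Icc (-N) (-N-m-1) := by
      intro i hi
      simp only [hA, hB, Finset.mem_sdiff, Finset.mem_filter, Finset.mem_Icc,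
        Finset.mem_union] at hi ⊢
      obtain ⟨⟨⟨hi1, hi2⟩, hp⟩, hnot⟩ := hi
      have : ¬(-N-m ≤ i ∧ i ≤ N-m) := fun hc => hnot ⟨⟨hc.1, hc.2⟩, hp⟩
      omega
    calc (A \ B).card ≤ (Icc (N-m+1) N ∪ Icc (-N) (-N-m-1)).card := Finset.card_le_card hsub
    _ ≤ (Icc (N-m+1) N).card + (Icc (-N) (-N-m-1)).card := Finset.card_union_le _ _
    _ ≤ m.natAbs := by rw [Int.card_Icc, Int.card_Icc]; omega
  have hBA : (B \ A).card ≤ m.natAbs := by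
    have hsub : B \ A ⊆ Icc (-N-m) (-N-1) ∪ Icc (N+1) (N-m) := by
      intro i hi
      simp only [hA, hB, Finset.mem_sdiff, Finset.mem_filter, Finset.mem_Icc,
        Finset.mem_union] at hi ⊢
      obtain ⟨⟨⟨hi1, hi2⟩, hp⟩, hnot⟩ := hi
      have : ¬(-N ≤ i ∧ i ≤ N) := fun hc => hnot ⟨⟨hc.1, hc.2⟩, hp⟩
      omega
    calc (B \ A).card ≤ (Icc (-N-m) (-N-1) ∪ Icc (N+1) (N-m)).card := Finset.card_le_card hsub
    _ ≤ (Icc (-N-m) (-N-1)).card + (Icc (N+1) (N-m)).card := Finset.card_union_le _ _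
    _ ≤ m.natAbs := by rw [Int.card_Icc, Int.card_Icc]; omega
  calc |∑ i ∈ A \ B, f i - ∑ i ∈ B \ A, f i|
      ≤ |∑ i ∈ A \ B, f i| + |∑ i ∈ B \ A, f i| := abs_sub _ _
  _ ≤ ((A \ B).card : ℝ) + ((B \ A).card : ℝ) :=
      add_le_add (sum_abs_le_card' f hb _) (sum_abs_le_card' f hb _)
  _ ≤ (m.natAbs : ℝ) + (m.natAbs : ℝ) := by
      exact add_le_add (by exact_mod_cast hAB) (by exact_mod_cast hBA)
  _ = 2 * (m.natAbs : ℝ) := by ring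

lemma filter_even_eq (M : ℕ) :
    (Icc (-(2*(M:ℤ))) (2*(M:ℤ))).filter (fun i => i % 2 = 0)
      = (Icc (-(M:ℤ)) (M:ℤ)).image (fun k => 2*k) := by
  ext i
  simp only [Finset.mem_filter, Finset.mem_image, Finset.mem_Icc]
  constructor
  · rintro ⟨⟨h1, h2⟩, h3⟩
    exact ⟨i/2, by omega, by omega⟩
  · rintro ⟨k, ⟨hk1, hk2⟩, rfl⟩
    omega

lemma filter_mod4_eq (M : ℕ) (r : ℤ) (hr : r = 1 ∨ r = 2 ∨ r = 3) :
    (Icc (-(4*(M:ℤ)+3)) (4*(M:ℤ)+3)).filter (fun i => i % 4 = r)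
      = (Icc (-(M:ℤ)-1) (M:ℤ)).image (fun k => 4*k+r) := by
  ext i
  simp only [Finset.mem_filter, Finset.mem_image, Finset.mem_Icc]
  constructor
  · rintro ⟨⟨h1, h2⟩, h3⟩
    exact ⟨(i-r)/4, by omega, by omega⟩
  · rintro ⟨k, ⟨hk1, hk2⟩, rfl⟩
    omega

lemma filter_mod4_zero_eq (M : ℕ) :
    (Icc (-(4*(M:ℤ)+3)) (4*(M:ℤ)+3)).filter (fun i => i % 4 = 0)
      = (Icc (-(M:ℤ)) (M:ℤ)).image (fun k => 4*k) := by
  ext i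
  simp only [Finset.mem_filter, Finset.mem_image, Finset.mem_Icc]
  constructor
  · rintro ⟨⟨h1, h2⟩, h3⟩
    exact ⟨i/4, by omega, by omega⟩
  · rintro ⟨k, ⟨hk1, hk2⟩, rfl⟩
    omega

lemma sum_mod4_decomp (f : ℤ → ℝ) (s : Finset ℤ) :
    ∑ i ∈ s, f i
      = ∑ i ∈ s.filter (fun i => i % 4 = 0), f i + ∑ i ∈ s.filter (fun i => i % 4 = 1), f i
        + ∑ i ∈ s.filter (fun i => i % 4 = 2), f i + ∑ i ∈ s.filter (fun i => i % 4 = 3), f i := by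
  have d12 : Disjoint (s.filter (fun i => i % 4 = 1)) (s.filter (fun i => i % 4 = 2)) := by
    rw [Finset.disjoint_left]; intro i h1 h2
    simp only [Finset.mem_filter] at h1 h2; omega
  have d123 : Disjoint (s.filter (fun i => i % 4 = 1) ∪ s.filter (fun i => i % 4 = 2))
      (s.filter (fun i => i % 4 = 3)) := by
    rw [Finset.disjoint_left]; intro i h1 h2
    simp only [Finset.mem_union, Finset.mem_filter] at h1 h2; omega
  have hu : s.filter (fun i => ¬ i % 4 = 0)
      = (s.filter (fun i => i % 4 = 1) ∪ s.filter (fun i => i % 4 = 2))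
        ∪ s.filter (fun i => i % 4 = 3) := by
    ext i
    simp only [Finset.mem_filter, Finset.mem_union]
    constructor
    · rintro ⟨hs, h⟩
      have : i % 4 = 1 ∨ i % 4 = 2 ∨ i % 4 = 3 := by omega
      tauto
    · rintro ((⟨hs, h⟩ | ⟨hs, h⟩) | ⟨hs, h⟩) <;> exact ⟨hs, by omega⟩
  rw [← Finset.sum_filter_add_sum_filter_not s (fun i => i % 4 = 0), hu,
    Finset.sum_union d123, Finset.sum_union d12]
  ring

lemma icc_insert_left (M : ℕ) :
    Icc (-(M:ℤ)-1) (M:ℤ) = insert (-(M:ℤ)-1) (Icc (-(M:ℤ)) (M:ℤ)) := by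
  ext i
  simp only [Finset.mem_insert, Finset.mem_Icc]
  omega

lemma card_Icc_symm (M : ℕ) : ((Icc (-(M:ℤ)) (M:ℤ)).card : ℝ) = 2*(M:ℝ)+1 := by
  rw [Int.card_Icc]
  have : ((M:ℤ) + 1 - -(M:ℤ)).toNat = 2*M+1 := by omega
  rw [this]; push_cast; ring

lemma card_Icc_symm' (M : ℕ) : ((Icc (-(M:ℤ)-1) (M:ℤ)).card : ℝ) = 2*(M:ℝ)+2 := by
  rw [Int.card_Icc]
  have : ((M:ℤ) + 1 - (-(M:ℤ)-1)).toNat = 2*M+2 := by omega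
  rw [this]; push_cast; ring

theorem rudin_shapiro_four_point_level_sets (a : ℤ → ℝ)
    (ha : ∀ i, a i = 1 ∨ a i = -1)
    (hrec : ∀ m : ℤ, a (4 * m) = a m ∧ a (4 * m + 1) = a m ∧
      a (4 * m + 2) = (-1 : ℝ) ^ m * a m ∧ a (4 * m + 3) = -((-1 : ℝ) ^ m) * a m)
    (η θ : ℤ → ℤ → ℤ → ℝ)
    (hη : ∀ m₁ m₂ m₃ : ℤ, Tendsto (fun N : ℕ =>
        (1 / (2 * (N : ℝ) + 1)) *
          ∑ i ∈ Finset.Icc (-(N : ℤ)) (N : ℤ),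
            a i * a (i + m₁) * a (i + m₂) * a (i + m₃))
      atTop (nhds (η m₁ m₂ m₃)))
    (hθ : ∀ m₁ m₂ m₃ : ℤ, Tendsto (fun N : ℕ =>
        (1 / (2 * (N : ℝ) + 1)) *
          ∑ i ∈ Finset.Icc (-(N : ℤ)) (N : ℤ),
            (-1 : ℝ) ^ i * a i * a (i + m₁) * a (i + m₂) * a (i + m₃))
      atTop (nhds (θ m₁ m₂ m₃)))
    (n : ℕ) (hn : 1 ≤ n) (l : ℤ) :
    η 1 (2 ^ n * (2 * l + 1)) (2 ^ n * (2 * l + 1) + 1) = 1 - 3 / 2 ^ n ∧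
    η 1 (2 * l + 1) (2 * l + 2) = 0 := by
  clear hθ
  -- normalized averages
  have hFm : ∀ m : ℤ, Tendsto (fun N : ℕ =>
      (1 / (2 * (N : ℝ) + 1)) * ∑ i ∈ Icc (-(N : ℤ)) (N : ℤ), RSf a m i)
      atTop (nhds (η 1 m (m + 1))) := by
    intro m
    refine (hη 1 m (m + 1)).congr (fun N => ?_)
    congr 1
    refine Finset.sum_congr rfl (fun i _ => ?_)
    simp only [RSf, add_assoc]
  -- K1 : odd shifts give zero
  have hK1 : ∀ m : ℤ, m % 2 = 1 → η 1 m (m + 1) = 0 := by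
    intro m hm
    have hS : ∀ N : ℕ, |∑ i ∈ Icc (-(N : ℤ)) (N : ℤ), RSf a m i| ≤ 2 * (m.natAbs : ℝ) := by
      intro N
      rw [← Finset.sum_filter_add_sum_filter_not (Icc (-(N : ℤ)) (N : ℤ))
        (fun i => i % 2 = 0)]
      have he : (Icc (-(N : ℤ)) (N : ℤ)).filter (fun i => ¬ i % 2 = 0)
          = (Icc (-(N : ℤ)) (N : ℤ)).filter (fun i => (i - m) % 2 = 0) := by
        ext i
        simp only [Finset.mem_filter]
        constructor
        · rintro ⟨h1, h2⟩; exact ⟨h1, by omega⟩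
        · rintro ⟨h1, h2⟩; exact ⟨h1, by omega⟩
      rw [he]
      exact cancel_bound (RSf a m) (RSf_abs a ha m) m (fun i => i % 2 = 0)
        (fun i hi => fact_odd_pair a ha hrec m hm i hi) N
    have hzero : Tendsto (fun N : ℕ =>
        (1 / (2 * (N : ℝ) + 1)) * ∑ i ∈ Icc (-(N : ℤ)) (N : ℤ), RSf a m i)
        atTop (nhds 0) := by
      refine squeeze_zero_norm (fun N => ?_)
        (tendsto_bounded_div (2 * (m.natAbs : ℝ))
          (fun N : ℕ => |∑ i ∈ Icc (-(N : ℤ)) (N : ℤ), RSf a m i|)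
          (fun N => by rw [abs_abs]; exact hS N) 2 1 (by norm_num) (by norm_num))
      have hpos : (0 : ℝ) < 2 * (N : ℝ) + 1 := by positivity
      rw [Real.norm_eq_abs, abs_mul, abs_of_pos (by positivity : (0:ℝ) < 1 / (2 * (N : ℝ) + 1)),
        one_div, inv_mul_eq_div]
    exact tendsto_nhds_unique (hFm m) hzero
  -- K2 : shifts ≡ 2 mod 4 give -1/2
  have hK2 : ∀ t : ℤ, t % 2 = 1 → η 1 (2 * t) (2 * t + 1) = -(1/2) := by
    intro t ht
    have hS : ∀ M : ℕ,
        |(∑ i ∈ Icc (-(2 * (M : ℤ))) (2 * (M : ℤ)), RSf a (2 * t) i) + (2 * (M : ℝ) + 1)|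
          ≤ 2 * (((2 * t : ℤ)).natAbs : ℝ) := by
      intro M
      rw [← Finset.sum_filter_add_sum_filter_not (Icc (-(2 * (M : ℤ))) (2 * (M : ℤ)))
        (fun i => i % 2 = 0)]
      have heven : ∑ i ∈ (Icc (-(2 * (M : ℤ))) (2 * (M : ℤ))).filter (fun i => i % 2 = 0),
          RSf a (2 * t) i = -(2 * (M : ℝ) + 1) := by
        have hodd_const : (-1 : ℝ) ^ t = -1 := by
          obtain ⟨s, rfl⟩ : ∃ s, t = 2 * s + 1 := ⟨t / 2, by omega⟩
          exact neg_one_zpow_odd s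
        rw [filter_even_eq M, Finset.sum_image (fun x hx y hy h => by omega)]
        have hcongr : ∑ k ∈ Icc (-(M : ℤ)) (M : ℤ), RSf a (2 * t) (2 * k)
            = ∑ _k ∈ Icc (-(M : ℤ)) (M : ℤ), (-1 : ℝ) :=
          Finset.sum_congr rfl (fun k _ => by
            rw [fact_two_even a ha hrec t (2 * k) (by omega), hodd_const])
        rw [hcongr, Finset.sum_const, nsmul_eq_mul, card_Icc_symm M]
        ring
      have hunion : (Icc (-(2 * (M : ℤ))) (2 * (M : ℤ))).filter (fun i => ¬ i % 2 = 0)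
          = (Icc (-(2 * (M : ℤ))) (2 * (M : ℤ))).filter (fun i => i % 4 = 1)
            ∪ (Icc (-(2 * (M : ℤ))) (2 * (M : ℤ))).filter (fun i => (i - 2 * t) % 4 = 1) := by
        ext i
        simp only [Finset.mem_filter, Finset.mem_union]
        constructor
        · rintro ⟨hs, h⟩
          have : i % 4 = 1 ∨ (i - 2 * t) % 4 = 1 := by omega
          tauto
        · rintro (⟨hs, h⟩ | ⟨hs, h⟩) <;> exact ⟨hs, by omega⟩
      have hd : Disjoint
          ((Icc (-(2 * (M : ℤ))) (2 * (M : ℤ))).filter (fun i => i % 4 = 1))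
          ((Icc (-(2 * (M : ℤ))) (2 * (M : ℤ))).filter (fun i => (i - 2 * t) % 4 = 1)) := by
        rw [Finset.disjoint_left]
        intro i h1 h2
        simp only [Finset.mem_filter] at h1 h2
        omega
      rw [hunion, Finset.sum_union hd, heven]
      have hcb := cancel_bound (RSf a (2 * t)) (RSf_abs a ha (2 * t)) (2 * t)
        (fun i => i % 4 = 1) (fun i hi => fact_two_pair a ha hrec t ht i hi) (2 * (M : ℤ))
      have harr : ∀ x y : ℝ,
          -(2 * (M : ℝ) + 1) + (x + y) + (2 * (M : ℝ) + 1) = x + y := by intro x y; ring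
      rw [harr]
      exact hcb
    have hsub : Tendsto (fun M : ℕ =>
        (1 / (2 * ((2 * M : ℕ) : ℝ) + 1)) *
          ∑ i ∈ Icc (-((2 * M : ℕ) : ℤ)) ((2 * M : ℕ) : ℤ), RSf a (2 * t) i)
        atTop (nhds (η 1 (2 * t) (2 * t + 1))) :=
      (hFm (2 * t)).comp (tendsto_atTop_mono (fun M : ℕ => by omega : ∀ M : ℕ, M ≤ 2 * M)
        tendsto_id)
    have heq : ∀ M : ℕ,
        (1 / (2 * ((2 * M : ℕ) : ℝ) + 1)) *
          ∑ i ∈ Icc (-((2 * M : ℕ) : ℤ)) ((2 * M : ℕ) : ℤ), RSf a (2 * t) i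
        = ((-2) * (M : ℝ) + (-1)) / (4 * (M : ℝ) + 1)
          + ((∑ i ∈ Icc (-(2 * (M : ℤ))) (2 * (M : ℤ)), RSf a (2 * t) i) + (2 * (M : ℝ) + 1))
            / (4 * (M : ℝ) + 1) := by
      intro M
      have hcast : ((2 * M : ℕ) : ℤ) = 2 * (M : ℤ) := by push_cast; ring
      have hcast2 : ((2 * M : ℕ) : ℝ) = 2 * (M : ℝ) := by push_cast; ring
      rw [hcast, hcast2]
      have hpos : (0 : ℝ) < 4 * (M : ℝ) + 1 := by positivity
      field_simp
      ring
    have hlim : Tendsto (fun M : ℕ =>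
        ((-2) * (M : ℝ) + (-1)) / (4 * (M : ℝ) + 1)
          + ((∑ i ∈ Icc (-(2 * (M : ℤ))) (2 * (M : ℤ)), RSf a (2 * t) i) + (2 * (M : ℝ) + 1))
            / (4 * (M : ℝ) + 1)) atTop (nhds (-(1/2))) := by
      have l1 := tendsto_ratio (-2) (-1) 4 1 (by norm_num) (by norm_num)
      have l2 := tendsto_bounded_div (2 * (((2 * t : ℤ)).natAbs : ℝ))
        (fun M : ℕ => (∑ i ∈ Icc (-(2 * (M : ℤ))) (2 * (M : ℤ)), RSf a (2 * t) i)
          + (2 * (M : ℝ) + 1)) hS 4 1 (by norm_num) (by norm_num)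
      have := l1.add l2
      convert this using 2
      norm_num
    exact tendsto_nhds_unique (hsub.congr heq) hlim
  -- K3 : recursion for multiples of 4
  have hK3 : ∀ m : ℤ, η 1 (4 * m) (4 * m + 1)
      = 1/2 + (-1 : ℝ) ^ m * (1 + η 1 m (m + 1)) / 4 := by
    intro m
    have hsub : Tendsto (fun M : ℕ =>
        (1 / (2 * ((4 * M + 3 : ℕ) : ℝ) + 1)) *
          ∑ i ∈ Icc (-((4 * M + 3 : ℕ) : ℤ)) ((4 * M + 3 : ℕ) : ℤ), RSf a (4 * m) i)
        atTop (nhds (η 1 (4 * m) (4 * m + 1))) :=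
      (hFm (4 * m)).comp (tendsto_atTop_mono
        (fun M : ℕ => by omega : ∀ M : ℕ, M ≤ 4 * M + 3) tendsto_id)
    have hlast : ∀ M : ℕ, ∑ k ∈ Icc (-(M : ℤ) - 1) (M : ℤ), RSf a m k
        = RSf a m (-(M : ℤ) - 1) + ∑ k ∈ Icc (-(M : ℤ)) (M : ℤ), RSf a m k := by
      intro M
      rw [icc_insert_left M, Finset.sum_insert (by simp only [Finset.mem_Icc]; omega)]
    have hsum : ∀ M : ℕ,
        ∑ i ∈ Icc (-((4 * M + 3 : ℕ) : ℤ)) ((4 * M + 3 : ℕ) : ℤ), RSf a (4 * m) i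
        = (2 * (M : ℝ) + 1) + (-1 : ℝ) ^ m * (2 * (M : ℝ) + 2) + (2 * (M : ℝ) + 2)
          + (-1 : ℝ) ^ m * (RSf a m (-(M : ℤ) - 1)
              + ∑ k ∈ Icc (-(M : ℤ)) (M : ℤ), RSf a m k) := by
      intro M
      have hcast : ((4 * M + 3 : ℕ) : ℤ) = 4 * (M : ℤ) + 3 := by push_cast; ring
      rw [hcast, sum_mod4_decomp, filter_mod4_zero_eq M,
        filter_mod4_eq M 1 (by norm_num), filter_mod4_eq M 2 (by norm_num),
        filter_mod4_eq M 3 (by norm_num),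
        Finset.sum_image (fun x hx y hy h => by omega),
        Finset.sum_image (fun x hx y hy h => by omega),
        Finset.sum_image (fun x hx y hy h => by omega),
        Finset.sum_image (fun x hx y hy h => by omega),
        Finset.sum_congr rfl (fun k _ => fact_r0 a ha hrec m k),
        Finset.sum_congr rfl (fun k _ => fact_r1 a ha hrec m k),
        Finset.sum_congr rfl (fun k _ => fact_r2 a ha hrec m k),
        Finset.sum_congr rfl (fun k _ => fact_r3 a ha hrec m k),
        ← Finset.mul_sum, hlast M]
      simp only [Finset.sum_const, nsmul_eq_mul, card_Icc_symm M, card_Icc_symm' M]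
      ring
    have heq : ∀ M : ℕ,
        (1 / (2 * ((4 * M + 3 : ℕ) : ℝ) + 1)) *
          ∑ i ∈ Icc (-((4 * M + 3 : ℕ) : ℤ)) ((4 * M + 3 : ℕ) : ℤ), RSf a (4 * m) i
        = (2 * (M : ℝ) + 1) / (8 * (M : ℝ) + 7)
          + (-1 : ℝ) ^ m * ((2 * (M : ℝ) + 2) / (8 * (M : ℝ) + 7))
          + (2 * (M : ℝ) + 2) / (8 * (M : ℝ) + 7)
          + (-1 : ℝ) ^ m * (RSf a m (-(M : ℤ) - 1) / (8 * (M : ℝ) + 7))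
          + (-1 : ℝ) ^ m * (((1 / (2 * (M : ℝ) + 1)) *
              ∑ k ∈ Icc (-(M : ℤ)) (M : ℤ), RSf a m k) * ((2 * (M : ℝ) + 1) / (8 * (M : ℝ) + 7))) := by
      intro M
      rw [hsum M]
      have hc : ((4 * M + 3 : ℕ) : ℝ) = 4 * (M : ℝ) + 3 := by push_cast; ring
      rw [hc]
      have h1 : (0 : ℝ) < 8 * (M : ℝ) + 7 := by positivity
      have h2 : (0 : ℝ) < 2 * (M : ℝ) + 1 := by positivity
      field_simp
      ring
    have t1 := tendsto_ratio 2 1 8 7 (by norm_num) (by norm_num)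
    have t2 := (tendsto_ratio 2 2 8 7 (by norm_num) (by norm_num)).const_mul ((-1 : ℝ) ^ m)
    have t3 := tendsto_ratio 2 2 8 7 (by norm_num) (by norm_num)
    have t4 := (tendsto_bounded_div 1 (fun M : ℕ => RSf a m (-(M : ℤ) - 1))
      (fun M => RSf_abs a ha m _) 8 7 (by norm_num) (by norm_num)).const_mul ((-1 : ℝ) ^ m)
    have t5 := (((hFm m).mul (tendsto_ratio 2 1 8 7 (by norm_num) (by norm_num))).const_mul
      ((-1 : ℝ) ^ m))
    have htotal := (((t1.add t2).add t3).add t4).add t5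
    have hval := tendsto_nhds_unique (hsub.congr heq) htotal
    rw [hval]
    ring
  -- main induction
  have main : ∀ n : ℕ, ∀ l : ℤ, 1 ≤ n →
      η 1 (2 ^ n * (2 * l + 1)) (2 ^ n * (2 * l + 1) + 1) = 1 - 3 / 2 ^ n := by
    intro n
    induction n using Nat.strong_induction_on with
    | _ n ih =>
      intro l hn
      obtain rfl | hn2 : n = 1 ∨ 2 ≤ n := by omega
      · rw [show ((2 : ℤ) ^ 1 * (2 * l + 1)) = 2 * (2 * l + 1) by ring,
          hK2 (2 * l + 1) (by omega)]
        norm_num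
      · obtain ⟨k, rfl⟩ : ∃ k, n = k + 2 := ⟨n - 2, by omega⟩
        rw [show ((2 : ℤ) ^ (k + 2) * (2 * l + 1)) = 4 * (2 ^ k * (2 * l + 1)) by ring,
          hK3 (2 ^ k * (2 * l + 1))]
        rcases Nat.eq_zero_or_pos k with rfl | hk
        · rw [show ((2 : ℤ) ^ 0 * (2 * l + 1)) = 2 * l + 1 by ring,
            hK1 (2 * l + 1) (by omega), neg_one_zpow_odd l]
          norm_num
        · obtain ⟨j, rfl⟩ : ∃ j, k = j + 1 := ⟨k - 1, by omega⟩
          have hE := ih (j + 1) (by omega) l (by omega)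
          have hsgn : (-1 : ℝ) ^ ((2 : ℤ) ^ (j + 1) * (2 * l + 1)) = 1 := by
            rw [show ((2 : ℤ) ^ (j + 1) * (2 * l + 1)) = 2 * (2 ^ j * (2 * l + 1)) by ring]
            exact neg_one_zpow_two_mul _
          rw [hsgn, hE]
          have h2 : ((2 : ℝ) ^ (j + 1)) ≠ 0 := by positivity
          rw [show ((2 : ℝ) ^ (j + 1 + 2)) = 2 ^ (j + 1) * 4 by rw [pow_add]; norm_num]
          field_simp
          ring
  constructor
  · exact main n l hn
  · rw [show (2 * l + 2 : ℤ) = (2 * l + 1) + 1 by ring]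
    exact hK1 (2 * l + 1) (by omega)
end
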